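/- Let V be a finite-dimensional real vector space, η a linear functional on V, ρ an alternating bilinear form on V (playing the role of dη at a point), K := {v ∈ ker η : ρ(v,w) = 0 for all w ∈ ker η} the characteristic subspace, and P a linear projection of V onto K. On Ṽ := V × K* define η̃(v,α) := η(v) and ρ̃((v,α),(w,β)) := ρ(v,w) − α(P w) + β(P v). Then the restriction of ρ̃ to ker η̃ is nondegenerate: if η(v) = 0 and ρ̃((v,α),(w,β)) = 0 for all (w,β) ∈ Ṽ with η(w) = 0, then (v,α) = (0,0). -/
import Mathlib


/-- The radical of a bilinear form `ρ` relative to a subspace `D`: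
vectors `v` with `ρ v w = 0` for all `w ∈ D`. -/
def relRadical {V : Type*} [AddCommGroup V] [Module ℝ V]
    (ρ : V →ₗ[ℝ] V →ₗ[ℝ] ℝ) (D : Submodule ℝ V) : Submodule ℝ V where
  carrier := {v | ∀ w ∈ D, ρ v w = 0}
  add_mem' := by
    intro a b ha hb w hw
    simp only [Set.mem_setOf_eq] at ha hb
    simp [map_add, ha w hw, hb w hw]
  zero_mem' := by intro w _; simp
  smul_mem' := by
    intro c a ha w hw
    simp only [Set.mem_setOf_eq] at ha
    simp [ha w hw]

/-- The contact-type thickened form `ρ̃` on `Ṽ = V × K*`: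
`ρ̃((v,α),(w,β)) = ρ(v,w) − α(P w) + β(P v)`. -/
def thickC {V : Type*} [AddCommGroup V] [Module ℝ V]
    (ρ : V →ₗ[ℝ] V →ₗ[ℝ] ℝ) (K : Submodule ℝ V) (P : V →ₗ[ℝ] V)
    (hPK : ∀ v : V, P v ∈ K) :
    (V × Module.Dual ℝ K) → (V × Module.Dual ℝ K) → ℝ :=
  fun x y => ρ x.1 y.1 - x.2 ⟨P y.1, hPK y.1⟩ + y.2 ⟨P x.1, hPK x.1⟩

/-- For a pre-contact structure at a point, given by a linear functional `η`
and an alternating bilinear form `ρ` (the role of `dη`), with characteristic subspace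
`K = {v ∈ ker η : ρ(v,w) = 0 ∀ w ∈ ker η}` and `P` a projection onto `K`, the restriction
of the thickened form `ρ̃` to `ker η̃` is nondegenerate. -/
theorem contact_thickening_nondegenerate
    (V : Type*) [AddCommGroup V] [Module ℝ V] [FiniteDimensional ℝ V]
    (η : V →ₗ[ℝ] ℝ)
    (ρ : V →ₗ[ℝ] V →ₗ[ℝ] ℝ) (halt : ∀ v, ρ v v = 0)
    (P : V →ₗ[ℝ] V) (hidem : P ∘ₗ P = P)
    (hPK : ∀ v : V, P v ∈ LinearMap.ker η ⊓ relRadical ρ (LinearMap.ker η))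
    (hrange : LinearMap.range P = LinearMap.ker η ⊓ relRadical ρ (LinearMap.ker η)) :
    ∀ x : V × Module.Dual ℝ ↥(LinearMap.ker η ⊓ relRadical ρ (LinearMap.ker η)),
      η x.1 = 0 →
      (∀ y : V × Module.Dual ℝ ↥(LinearMap.ker η ⊓ relRadical ρ (LinearMap.ker η)),
        η y.1 = 0 →
        thickC ρ (LinearMap.ker η ⊓ relRadical ρ (LinearMap.ker η)) P hPK x y = 0) →
      x = 0 := by
  set K := LinearMap.ker η ⊓ relRadical ρ (LinearMap.ker η) with hK
  rintro ⟨v, α⟩ hv h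
  -- P fixes K
  have hPfix : ∀ k ∈ K, P k = k := by
    intro k hk
    obtain ⟨u, hu⟩ := hrange.ge hk
    rw [← hu, ← LinearMap.comp_apply, hidem]
  -- alternating implies skew
  have hskew : ∀ a b, ρ a b = -ρ b a := by
    intro a b
    have := halt (a + b)
    simp only [map_add, LinearMap.add_apply, halt a, halt b] at this
    linarith
  -- Step 1: P v = 0
  have hPv : P v = 0 := by
    have hall : ∀ β : Module.Dual ℝ K, β ⟨P v, hPK v⟩ = 0 := by
      intro β
      have := h (0, β) (by simp)
      simp only [thickC, map_zero, LinearMap.zero_apply] at this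
      have hz : ∀ hp : (0:V) ∈ K, α ⟨0, hp⟩ = 0 := fun hp => by
        rw [show (⟨(0:V), hp⟩ : K) = 0 from rfl]; simp
      simpa [hz] using this
    have : (⟨P v, hPK v⟩ : K) = 0 := by
      rwa [← Module.forall_dual_apply_eq_zero_iff ℝ (⟨P v, hPK v⟩ : K)]
    exact congrArg Subtype.val this
  -- Step 2: for w ∈ ker η, ρ v w = α(P w)
  have key : ∀ w, η w = 0 → ρ v w - α ⟨P w, hPK w⟩ = 0 := by
    intro w hw
    have := h (w, 0) hw
    simp only [thickC, hPv] at this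
    simpa using this
  -- Step 3: α = 0
  have hα : α = 0 := by
    ext k
    have hk := k.2
    have hkker : η k.1 = 0 := (LinearMap.mem_ker.mp hk.1)
    have hρvk : ρ v k.1 = 0 := by
      have : ρ k.1 v = 0 := hk.2 v (LinearMap.mem_ker.mpr hv)
      rw [hskew]; simp [this]
    have := key k.1 hkker
    rw [hρvk] at this
    have hPk : P k.1 = k.1 := hPfix k.1 hk
    have : α ⟨P k.1, hPK k.1⟩ = 0 := by linarith
    simpa [hPk] using this
  -- Step 4: v ∈ K
  have hvK : v ∈ K := by
    constructor
    · exact LinearMap.mem_ker.mpr hv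
    · intro w hw
      have := key w (LinearMap.mem_ker.mp hw)
      rw [hα] at this
      simpa using this
  have hv0 : v = 0 := by rw [← hPfix v hvK, hPv]
  simp [hv0, hα, Prod.ext_iff]
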